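/- arXiv:1401.1773 — 5 statements merged into one kernel-verified Lean document; each statement's English description precedes it below -/
import Mathlib

section
/- Let n be a positive integer, p a prime, and A an n×n integer matrix. Then there exist unimodular matrices P, Q ∈ GL_n(ℤ) such that PAQ is p-correspondent, i.e., for PAQ of rank r with invariant factors s_1,…,s_r and nonzero eigenvalues λ_1,…,λ_r (in a finite extension of ℚ_p) ordered by increasing p-adic valuation, v_p(s_i) = v_p(λ_i) for all i ∈ {1,…,r}. -/
open Matrix Polynomial

/-- The `k`-th determinantal divisor of an integer matrix: the GCD of all
`k × k` minors (non-injective row/column selections contribute `0` and do not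
change the GCD). -/
noncomputable def detDiv {n : ℕ} (A : Matrix (Fin n) (Fin n) ℤ) (k : ℕ) : ℤ :=
  Finset.univ.gcd (fun στ : (Fin k → Fin n) × (Fin k → Fin n) =>
    (A.submatrix στ.1 στ.2).det)

/-- `A` is `p`-characterized: for each `i ∈ [1, r]` (where `r = rank A`), the
`p`-adic valuation of the coefficient `f_i` of `x^(n-i)` in the characteristic
polynomial of `A` equals the `p`-adic valuation of the `i`-th determinantal
divisor `Δ_i` of `A`.  Equality of valuations is expressed via divisibility by
all powers of `p`. -/
def PCharacterized {n : ℕ} (p : ℕ) (A : Matrix (Fin n) (Fin n) ℤ) : Prop :=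
  ∀ i : ℕ, 1 ≤ i → i ≤ A.rank →
    ∀ k : ℕ, ((p : ℤ) ^ k ∣ A.charpoly.coeff (n - i) ↔ (p : ℤ) ^ k ∣ detDiv A i)

/-- `s : Fin n → ℤ` is (the diagonal of) a Smith normal form of `A`:
`A = P ⬝ diagonal s ⬝ Q` for unimodular `P, Q`, with the divisibility chain
`s i ∣ s j` for `i ≤ j`. -/
def IsSmithDiag {n : ℕ} (A : Matrix (Fin n) (Fin n) ℤ) (s : Fin n → ℤ) : Prop :=
  (∃ P Q : Matrix (Fin n) (Fin n) ℤ, IsUnit P.det ∧ IsUnit Q.det ∧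
      A = P * Matrix.diagonal s * Q) ∧
    ∀ i j : Fin n, i ≤ j → s i ∣ s j

/-- The `p`-adic valuation of an element `a` of a finite extension of `ℚ_p`,
defined via its minimal polynomial `x^d + ⋯ + a₀` over `ℚ_p` as `v_p(a₀)/d`. -/
noncomputable def padicEigVal (p : ℕ) [Fact p.Prime] {K : Type*} [Field K]
    [Algebra ℚ_[p] K] (a : K) : ℚ :=
  (((minpoly ℚ_[p] a).coeff 0).valuation : ℚ) / ((minpoly ℚ_[p] a).natDegree : ℚ)

open scoped Classical in
/-- `A` is `p`-correspondent: for any Smith normal form `diag s` of `A` and any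
finite extension `K` of `ℚ_p` containing all eigenvalues of `A` (i.e. in which
the characteristic polynomial splits, having `n` roots counted with
multiplicity), the multiset of `p`-adic valuations of the nonzero eigenvalues
of `A` equals the multiset of `p`-adic valuations of the nonzero invariant
factors of `A`.  (Equality of multisets is the same as equality of the sorted
lists `v_p(λ_1) ≤ ⋯ ≤ v_p(λ_r)` and `v_p(s_1), …, v_p(s_r)`.) -/
def PCorrespondent {n : ℕ} (p : ℕ) [Fact p.Prime] (A : Matrix (Fin n) (Fin n) ℤ) : Prop :=
  ∀ s : Fin n → ℤ, IsSmithDiag A s →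
    ∀ (K : Type) (_ : Field K) (_ : Algebra ℚ_[p] K) (_ : FiniteDimensional ℚ_[p] K),
      (A.charpoly.map (Int.castRingHom K)).roots.card = n →
      (((A.charpoly.map (Int.castRingHom K)).roots.filter (· ≠ 0)).map (padicEigVal p))
        = ((Finset.univ.val.map s).filter (· ≠ 0)).map
            (fun x => (padicValInt p x : ℚ))

/-!
Over a principal ideal domain every square matrix is equivalent to a diagonal one, and
conjugating by a permutation matrix orders the diagonal entries `d i` by increasing
`v(d i) = emultiplicity p (d i)`; since `v 0 = ⊤`, the zero entries come last. Such a
diagonal matrix is `p`-correspondent: its eigenvalues are its diagonal entries, and for any Smith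
form `diagonal s` of it, `s` is sorted the same way by the divisibility chain, and the
determinantal divisors `Δ_k`, being invariant under unimodular equivalence, agree up to sign.
For a sorted diagonal, `v(Δ_k)` is the sum of the first `k` valuations: the leading principal
minor attains it, and every nonzero `k`-minor is a multiple of a product of `k` distinct
entries. Equal partial sums then force `v(d i) = v(s i)` entry by entry.
-/

open Module

theorem Function.Embedding.exists_sumEquiv_extend {α β γ : Type*} [Fintype α] [Fintype β]
    [Fintype γ] (f : α ↪ γ) (h : Fintype.card (α ⊕ β) = Fintype.card γ) :
    ∃ ε : α ⊕ β ≃ γ, ∀ a, ε (Sum.inl a) = f a := by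
  classical
  have hcompl : Fintype.card β = Fintype.card ↥(Set.range f)ᶜ := by
    rw [Fintype.card_compl_set, Set.card_range_of_injective f.injective]
    rw [Fintype.card_sum] at h
    omega
  obtain ⟨g⟩ := Fintype.card_eq.mp hcompl
  exact ⟨(f.toEquivRange.sumCongr g).trans (Equiv.Set.sumCompl _), fun a => by simp⟩

theorem LinearMap.exists_basis_sum_of_basis_range {R M M' ι κ : Type*} [CommRing R]
    [IsDomain R] [IsPrincipalIdealRing R] [AddCommGroup M] [Module R M] [AddCommGroup M']
    [Module R M'] [Finite ι] (e : Basis ι R M) (φ : M →ₗ[R] M')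
    (bN : Basis κ R (LinearMap.range φ)) :
    ∃ (k : ℕ) (c : Basis (κ ⊕ Fin k) R M),
      (∀ i, φ (c (Sum.inl i)) = bN i) ∧ ∀ j, φ (c (Sum.inr j)) = 0 := by
  choose x hx using fun i => (bN i).2
  let σ : LinearMap.range φ →ₗ[R] M := bN.constr R x
  have hσ : ∀ y, φ (σ y) = y := by
    have : φ ∘ₗ σ = (LinearMap.range φ).subtype := bN.ext fun i => by simp [σ, hx]
    exact LinearMap.congr_fun this
  have hσinj : Function.Injective σ := fun y y' h =>
    Subtype.ext (by rw [← hσ y, ← hσ y', h])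
  have hcompl : IsCompl (LinearMap.range σ) (LinearMap.ker φ) := by
    constructor
    · rw [Submodule.disjoint_def]
      rintro _ ⟨y, rfl⟩ hy
      rw [LinearMap.mem_ker, hσ] at hy
      rw [show y = 0 from Subtype.ext hy, map_zero]
    · rw [codisjoint_iff, eq_top_iff]
      intro x _
      let y : LinearMap.range φ := ⟨φ x, φ.mem_range_self x⟩
      rw [← add_sub_cancel (σ y) x]
      refine Submodule.add_mem_sup ⟨y, rfl⟩ ?_
      rw [LinearMap.mem_ker, map_sub, hσ, sub_self]
  obtain ⟨k, bK⟩ := Submodule.basisOfPid e (LinearMap.ker φ)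
  refine ⟨k, ((bN.map (LinearEquiv.ofInjective σ hσinj)).prod bK).map
    (Submodule.prodEquivOfIsCompl _ _ hcompl), fun i => ?_, fun j => ?_⟩
  · simp [hσ]
  · simp

theorem LinearMap.exists_basis_apply_eq_smul {R M M' ι : Type*} [CommRing R] [IsDomain R]
    [IsPrincipalIdealRing R] [AddCommGroup M] [Module R M] [AddCommGroup M'] [Module R M']
    [Fintype ι] (e : Basis ι R M) (e' : Basis ι R M') (φ : M →ₗ[R] M') :
    ∃ (b : Basis ι R M) (b' : Basis ι R M') (d : ι → R), ∀ i, φ (b i) = d i • b' i := by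
  obtain ⟨m, b', bN, f, a, hsnf⟩ := Submodule.smithNormalForm e' (LinearMap.range φ)
  obtain ⟨k, c, hc_inl, hc_inr⟩ := φ.exists_basis_sum_of_basis_range e bN
  obtain ⟨ε, hε⟩ := f.exists_sumEquiv_extend (β := Fin k)
    (Fintype.card_congr (c.indexEquiv e))
  refine ⟨c.reindex ε, b', Sum.elim a 0 ∘ ε.symm, fun i => ?_⟩
  obtain ⟨j, rfl⟩ := ε.surjective i
  rcases j with j | j
  · simp only [Basis.reindex_apply, Function.comp_apply, Equiv.symm_apply_apply, Sum.elim_inl,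
      hc_inl, hsnf]
    rw [hε]
  · simp [hc_inr]

theorem Module.Basis.isUnit_det_toMatrix {R M ι : Type*} [CommRing R] [AddCommGroup M]
    [Module R M] [Fintype ι] [DecidableEq ι] (b b' : Basis ι R M) : IsUnit (b.toMatrix b').det :=
  Matrix.isUnit_det_of_right_inverse (b.toMatrix_mul_toMatrix_flip b')

theorem Matrix.exists_mul_mul_eq_diagonal {R ι : Type*} [CommRing R] [IsDomain R]
    [IsPrincipalIdealRing R] [Fintype ι] [DecidableEq ι] (A : Matrix ι ι R) :
    ∃ (P Q : Matrix ι ι R) (d : ι → R), IsUnit P.det ∧ IsUnit Q.det ∧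
      P * A * Q = diagonal d := by
  let e := Pi.basisFun R ι
  obtain ⟨b, b', d, hbd⟩ := (Matrix.toLin e e A).exists_basis_apply_eq_smul e e
  refine ⟨b'.toMatrix e, e.toMatrix b, d, b'.isUnit_det_toMatrix e, e.isUnit_det_toMatrix b, ?_⟩
  rw [← LinearMap.toMatrix_toLin e e A, basis_toMatrix_mul_linearMap_toMatrix_mul_basis_toMatrix]
  ext i j
  rw [LinearMap.toMatrix_apply, hbd, map_smul, b'.repr_self, diagonal_apply]
  split_ifs with h <;> simp [h]

theorem Matrix.permMatrix_mul_diagonal_mul_permMatrix_inv {R ι : Type*} [CommRing R]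
    [Fintype ι] [DecidableEq ι] (π : Equiv.Perm ι) (d : ι → R) :
    π.permMatrix R * diagonal d * π⁻¹.permMatrix R = diagonal (d ∘ π) := by
  rw [PEquiv.toMatrix_toPEquiv_mul, Equiv.Perm.inv_def, PEquiv.mul_toMatrix_toPEquiv,
    submatrix_submatrix, Equiv.symm_symm]
  exact submatrix_diagonal_equiv d π

theorem Matrix.isUnit_det_permMatrix {R ι : Type*} [CommRing R] [Fintype ι] [DecidableEq ι]
    (π : Equiv.Perm ι) : IsUnit (π.permMatrix R).det := by
  rw [det_permutation]
  exact (Equiv.Perm.sign π).isUnit.map (Int.castRingHom R)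

theorem Matrix.det_mul_eq_sum_prod_mul_det_submatrix {R ι κ : Type*} [CommRing R] [Fintype ι]
    [Fintype κ] [DecidableEq κ] (X : Matrix κ ι R) (Y : Matrix ι κ R) :
    (X * Y).det = ∑ r : κ → ι, (∏ i, X i (r i)) * (Y.submatrix r id).det := by
  have hrows : (X * Y).det = (detRowAlternating : (κ → R) [⋀^κ]→ₗ[R] R).toMultilinearMap
      (fun i => ∑ l, X i l • Y l) := by
    change detRowAlternating _ = detRowAlternating _
    congr with i j
    simp [mul_apply, Finset.sum_apply]
  rw [hrows, MultilinearMap.map_sum]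
  refine Finset.sum_congr rfl fun r _ => ?_
  rw [MultilinearMap.map_smul_univ, smul_eq_mul]
  rfl

section DetDiv

variable {n : ℕ}

theorem detDiv_dvd_det_submatrix (A : Matrix (Fin n) (Fin n) ℤ) {k : ℕ}
    (σ τ : Fin k → Fin n) :
    detDiv A k ∣ (A.submatrix σ τ).det :=
  Finset.gcd_dvd (Finset.mem_univ (σ, τ))

theorem dvd_detDiv_iff {A : Matrix (Fin n) (Fin n) ℤ} {k : ℕ} {x : ℤ} :
    x ∣ detDiv A k ↔ ∀ σ τ : Fin k → Fin n, x ∣ (A.submatrix σ τ).det := by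
  simp [detDiv, Finset.dvd_gcd_iff]

theorem detDiv_dvd_detDiv_mul_left (U B : Matrix (Fin n) (Fin n) ℤ) (k : ℕ) :
    detDiv B k ∣ detDiv (U * B) k := by
  refine dvd_detDiv_iff.mpr fun σ τ => ?_
  rw [show (U * B).submatrix σ τ = U.submatrix σ id * B.submatrix id τ from rfl,
    det_mul_eq_sum_prod_mul_det_submatrix]
  exact Finset.dvd_sum fun r _ => (detDiv_dvd_det_submatrix B r τ).mul_left _

theorem detDiv_dvd_detDiv_transpose (A : Matrix (Fin n) (Fin n) ℤ) (k : ℕ) :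
    detDiv A k ∣ detDiv Aᵀ k := by
  refine dvd_detDiv_iff.mpr fun σ τ => ?_
  rw [← transpose_submatrix, det_transpose]
  exact detDiv_dvd_det_submatrix A τ σ

theorem detDiv_dvd_detDiv_mul_right (B V : Matrix (Fin n) (Fin n) ℤ) (k : ℕ) :
    detDiv B k ∣ detDiv (B * V) k :=
  calc detDiv B k ∣ detDiv Bᵀ k := detDiv_dvd_detDiv_transpose B k
    _ ∣ detDiv (Vᵀ * Bᵀ) k := detDiv_dvd_detDiv_mul_left _ _ k
    _ ∣ detDiv (Vᵀ * Bᵀ)ᵀ k := detDiv_dvd_detDiv_transpose _ k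
    _ = detDiv (B * V) k := by rw [← transpose_mul, transpose_transpose]

theorem associated_detDiv_mul_mul {U V : Matrix (Fin n) (Fin n) ℤ} (hU : IsUnit U.det)
    (hV : IsUnit V.det) (B : Matrix (Fin n) (Fin n) ℤ) (k : ℕ) :
    Associated (detDiv (U * B * V) k) (detDiv B k) := by
  refine associated_of_dvd_dvd ?_ ((detDiv_dvd_detDiv_mul_left U B k).trans
    (detDiv_dvd_detDiv_mul_right _ V k))
  have hB : U⁻¹ * (U * B * V) * V⁻¹ = B := by
    simp only [Matrix.mul_assoc, mul_nonsing_inv V hV, Matrix.mul_one, ← Matrix.mul_assoc U⁻¹,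
      nonsing_inv_mul U hU, Matrix.one_mul]
  calc detDiv (U * B * V) k ∣ detDiv (U⁻¹ * (U * B * V)) k := detDiv_dvd_detDiv_mul_left _ _ k
    _ ∣ detDiv (U⁻¹ * (U * B * V) * V⁻¹) k := detDiv_dvd_detDiv_mul_right _ _ k
    _ = detDiv B k := by rw [hB]

end DetDiv

theorem Fin.val_le_of_strictMono {k n : ℕ} {g : Fin k → Fin n} (hg : StrictMono g) (i : Fin k) :
    (i : ℕ) ≤ g i := by
  simpa using Finset.card_le_card_of_injOn g (s := Finset.Iio i) (t := Finset.Iio (g i))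
    (fun j hj => by simpa using hg (by simpa using hj)) hg.injective.injOn

theorem Monotone.sum_castLE_le_sum_comp {M : Type*} [AddCommMonoid M] [PartialOrder M]
    [IsOrderedAddMonoid M] {k n : ℕ} {f : Fin n → M} (hf : Monotone f) (hk : k ≤ n)
    {σ : Fin k → Fin n} (hσ : Function.Injective σ) :
    ∑ i, f (Fin.castLE hk i) ≤ ∑ i, f (σ i) := by
  set T := Finset.univ.image σ
  have hT : T.card = k := by simp [T, Finset.card_image_of_injective _ hσ]
  calc ∑ i, f (Fin.castLE hk i) ≤ ∑ i, f (T.orderEmbOfFin hT i) :=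
        Finset.sum_le_sum fun i _ =>
          hf (Fin.le_def.mpr (Fin.val_le_of_strictMono (T.orderEmbOfFin hT).strictMono i))
    _ = ∑ j ∈ T, f j := by
        conv_rhs => rw [← T.image_orderEmbOfFin_univ hT]
        rw [Finset.sum_image fun i _ j _ h => (T.orderEmbOfFin hT).injective h]
    _ = ∑ i, f (σ i) := Finset.sum_image fun i _ j _ h => hσ h

theorem ENat.eq_of_monotone_of_sum_castLE_eq {n : ℕ} {f g : Fin n → ℕ∞} (hf : Monotone f)
    (hg : Monotone g)
    (h : ∀ k (hk : k ≤ n), ∑ i, f (Fin.castLE hk i) = ∑ i, g (Fin.castLE hk i)) :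
    f = g := by
  funext i
  have top_of_sum_eq_top : ∀ φ : Fin n → ℕ∞, Monotone φ →
      ∑ j : Fin i, φ (Fin.castLE i.2.le j) = ⊤ → φ i = ⊤ := fun φ hφ hsum => by
    obtain ⟨j, -, hj⟩ := ENat.sum_eq_top.mp hsum
    have hle : Fin.castLE i.2.le j ≤ i := Fin.le_def.mpr (by simp [j.2.le])
    exact top_le_iff.mp (hj ▸ hφ hle)
  have hsucc := h (i + 1) i.2
  simp only [Fin.sum_univ_castSucc, Fin.castLE_castSucc, h i i.2.le] at hsucc
  by_cases hS : ∑ j : Fin i, g (Fin.castLE i.2.le j) = ⊤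
  · rw [top_of_sum_eq_top g hg hS, top_of_sum_eq_top f hf (h i i.2.le ▸ hS)]
  · exact WithTop.add_left_cancel hS hsucc

theorem Matrix.det_submatrix_eq_zero_of_not_injective {R ι κ : Type*} [CommRing R]
    [Fintype κ] [DecidableEq κ] (A : Matrix ι ι R) {σ : κ → ι}
    (hσ : ¬Function.Injective σ) (τ : κ → ι) : (A.submatrix σ τ).det = 0 := by
  obtain ⟨i, j, hij, hne⟩ := Function.not_injective_iff.mp hσ
  exact det_zero_of_row_eq hne (funext fun l => by simp [hij])

theorem Matrix.prod_dvd_det_submatrix_diagonal {R ι κ : Type*} [CommRing R] [DecidableEq ι]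
    [Fintype κ] [DecidableEq κ] (d : ι → R) (σ τ : κ → ι) :
    (∏ i, d (σ i)) ∣ ((diagonal d).submatrix σ τ).det := by
  rw [det_apply]
  refine Finset.dvd_sum fun π _ => ?_
  rw [Units.smul_def, zsmul_eq_mul]
  refine Dvd.dvd.mul_left ?_ _
  by_cases hπ : ∀ i, σ (π i) = τ i
  · rw [← Equiv.prod_comp π (fun i => d (σ i))]
    exact (Finset.prod_congr rfl fun i _ => by simp [← hπ i]).dvd
  · obtain ⟨i, hi⟩ := not_forall.mp hπ
    rw [Finset.prod_eq_zero (f := fun j => (diagonal d).submatrix σ τ (π j) j)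
      (Finset.mem_univ i) (diagonal_apply_ne d hi)]
    exact dvd_zero _

section Valuation

variable (p : ℕ) [Fact p.Prime]

theorem emultiplicity_natCast_eq_top_iff {x : ℤ} : emultiplicity (p : ℤ) x = ⊤ ↔ x = 0 := by
  simp [Int.finiteMultiplicity_iff, (Fact.out : p.Prime).ne_one]

omit [Fact p.Prime] in
theorem padicValInt_eq_toNat_emultiplicity (x : ℤ) :
    padicValInt p x = (emultiplicity (p : ℤ) x).toNat := by
  rw [padicValInt, ← Nat.toNat_emultiplicity, Int.emultiplicity_natAbs]

theorem emultiplicity_detDiv_diagonal {n : ℕ} {d : Fin n → ℤ}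
    (hd : Monotone fun i => emultiplicity (p : ℤ) (d i)) {k : ℕ} (hk : k ≤ n) :
    emultiplicity (p : ℤ) (detDiv (diagonal d) k) =
      ∑ i, emultiplicity (p : ℤ) (d (Fin.castLE hk i)) := by
  have hp : Prime (p : ℤ) := Nat.prime_iff_prime_int.mp Fact.out
  rw [← Finset.emultiplicity_prod hp]
  apply le_antisymm
  · apply emultiplicity_le_emultiplicity_of_dvd_right
    simpa [submatrix_diagonal _ _ (Fin.castLE_injective hk)] using
      detDiv_dvd_det_submatrix (diagonal d) (Fin.castLE hk) (Fin.castLE hk)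
  · refine ENat.forall_natCast_le_iff_le.mp fun m hm => ?_
    rw [← pow_dvd_iff_le_emultiplicity]
    refine dvd_detDiv_iff.mpr fun σ τ => ?_
    by_cases hσ : Function.Injective σ
    · refine (pow_dvd_iff_le_emultiplicity.mpr ?_).trans (prod_dvd_det_submatrix_diagonal d σ τ)
      rw [Finset.emultiplicity_prod hp] at hm ⊢
      exact hm.trans (hd.sum_castLE_le_sum_comp hk hσ)
    · rw [det_submatrix_eq_zero_of_not_injective _ hσ]
      exact dvd_zero _

theorem emultiplicity_eq_of_diagonal_eq_mul_diagonal_mul {n : ℕ} {d s : Fin n → ℤ}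
    (hd : Monotone fun i => emultiplicity (p : ℤ) (d i))
    (hs : Monotone fun i => emultiplicity (p : ℤ) (s i)) {U V : Matrix (Fin n) (Fin n) ℤ}
    (hU : IsUnit U.det) (hV : IsUnit V.det) (heq : diagonal d = U * diagonal s * V) (i : Fin n) :
    emultiplicity (p : ℤ) (d i) = emultiplicity (p : ℤ) (s i) := by
  refine congrFun (ENat.eq_of_monotone_of_sum_castLE_eq hd hs fun k hk => ?_) i
  rw [← emultiplicity_detDiv_diagonal p hd hk, ← emultiplicity_detDiv_diagonal p hs hk, heq]
  exact emultiplicity_eq_of_associated_right (associated_detDiv_mul_mul hU hV _ k)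

theorem map_padicValInt_filter_ne_zero_eq {ι : Type*} [Fintype ι] {d s : ι → ℤ}
    (h : ∀ i, emultiplicity (p : ℤ) (d i) = emultiplicity (p : ℤ) (s i)) :
    ((Finset.univ.val.map d).filter (· ≠ 0)).map (fun x => (padicValInt p x : ℚ)) =
      ((Finset.univ.val.map s).filter (· ≠ 0)).map (fun x => (padicValInt p x : ℚ)) := by
  simp only [Multiset.filter_map, Multiset.map_map]
  refine Multiset.map_congr (Multiset.filter_congr fun i _ => ?_) fun i _ => ?_
  · simp only [Function.comp_apply, ne_eq, ← emultiplicity_natCast_eq_top_iff p, h]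
  · simp only [Function.comp_apply, padicValInt_eq_toNat_emultiplicity, h]

end Valuation

theorem Matrix.roots_charpoly_map_diagonal {R K ι : Type*} [CommRing R] [Field K] [Fintype ι]
    [DecidableEq ι] (f : R →+* K) (d : ι → R) :
    ((diagonal d).charpoly.map f).roots = (Finset.univ.val.map d).map f := by
  rw [charpoly_diagonal, Polynomial.map_prod, Multiset.map_map, Finset.prod_eq_multiset_prod]
  simp only [Polynomial.map_sub, map_X, map_C]
  simpa [Multiset.map_map] using roots_multiset_prod_X_sub_C (Finset.univ.val.map (f ∘ d))

theorem padicEigVal_intCast (p : ℕ) [Fact p.Prime] {K : Type*} [Field K] [Algebra ℚ_[p] K]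
    (m : ℤ) : padicEigVal p (m : K) = padicValInt p m := by
  rw [← map_intCast (algebraMap ℚ_[p] K), padicEigVal, minpoly.eq_X_sub_C K (m : ℚ_[p]),
    natDegree_X_sub_C, coeff_sub, coeff_X_zero, coeff_C_zero, zero_sub, ← Int.cast_neg,
    Padic.valuation_intCast, padicValInt, padicValInt, Int.natAbs_neg]
  simp

open scoped Classical in
theorem map_padicEigVal_filter_roots_charpoly_diagonal (p : ℕ) [Fact p.Prime] {K : Type*}
    [Field K] [Algebra ℚ_[p] K] {n : ℕ} (d : Fin n → ℤ) :
    (((diagonal d).charpoly.map (Int.castRingHom K)).roots.filter (· ≠ 0)).map (padicEigVal p) =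
      ((Finset.univ.val.map d).filter (· ≠ 0)).map (fun x => (padicValInt p x : ℚ)) := by
  have : CharZero K := charZero_of_injective_algebraMap (algebraMap ℚ_[p] K).injective
  rw [roots_charpoly_map_diagonal, Multiset.filter_map, Multiset.map_map]
  refine Multiset.map_congr (Multiset.filter_congr fun x _ => ?_) fun x _ => ?_
  · simp
  · simp [padicEigVal_intCast]

theorem pCorrespondent_diagonal (p : ℕ) [Fact p.Prime] {n : ℕ} {d : Fin n → ℤ}
    (hd : Monotone fun i => emultiplicity (p : ℤ) (d i)) : PCorrespondent p (diagonal d) := by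
  rintro s ⟨⟨U, V, hU, hV, heq⟩, hchain⟩ K _ _ _ -
  have hs : Monotone fun i => emultiplicity (p : ℤ) (s i) := fun i j hij =>
    emultiplicity_le_emultiplicity_of_dvd_right (hchain i j hij)
  rw [map_padicEigVal_filter_roots_charpoly_diagonal]
  exact map_padicValInt_filter_ne_zero_eq p
    (emultiplicity_eq_of_diagonal_eq_mul_diagonal_mul p hd hs hU hV heq)

theorem exists_unimodular_pCorrespondent_general (n : ℕ) (p : ℕ) [Fact p.Prime]
    (A : Matrix (Fin n) (Fin n) ℤ) :
    ∃ P Q : Matrix (Fin n) (Fin n) ℤ, IsUnit P.det ∧ IsUnit Q.det ∧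
      PCorrespondent p (P * A * Q) := by
  obtain ⟨P, Q, d, hP, hQ, hPAQ⟩ := exists_mul_mul_eq_diagonal A
  obtain ⟨π, hπ⟩ :
      ∃ π : Equiv.Perm (Fin n), Monotone fun i => emultiplicity (p : ℤ) (d (π i)) :=
    ⟨Tuple.sort _, Tuple.monotone_sort fun i => emultiplicity (p : ℤ) (d i)⟩
  refine ⟨π.permMatrix ℤ * P, Q * π⁻¹.permMatrix ℤ,
    by simpa only [det_mul] using (isUnit_det_permMatrix π).mul hP,
    by simpa only [det_mul] using hQ.mul (isUnit_det_permMatrix π⁻¹), ?_⟩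
  have hdiag : π.permMatrix ℤ * P * A * (Q * π⁻¹.permMatrix ℤ) = diagonal (d ∘ π) := by
    rw [← permMatrix_mul_diagonal_mul_permMatrix_inv, ← hPAQ]
    simp only [Matrix.mul_assoc]
  rw [hdiag]
  exact pCorrespondent_diagonal p hπ

/-- For any integer matrix `A` and any prime `p`, there are
unimodular `P, Q ∈ GL_n(ℤ)` such that `P * A * Q` is `p`-correspondent. -/
theorem exists_unimodular_pCorrespondent (n : ℕ) (hn : 0 < n) (p : ℕ) [Fact p.Prime]
    (A : Matrix (Fin n) (Fin n) ℤ) :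
    ∃ P Q : Matrix (Fin n) (Fin n) ℤ, IsUnit P.det ∧ IsUnit Q.det ∧
      PCorrespondent p (P * A * Q) :=
  exists_unimodular_pCorrespondent_general n p A
end

section
/- Let n be a positive integer, p a prime, and A ∈ ℤ^{n×n} a non-singular matrix. Then there exists a finite-degree extension K_p of ℚ_p and an invertible matrix U with entries in K_p such that U^{-1} A U is similar to A and is p-correspondent: the matrix U^{-1} A U (which can be taken to be the modified Jordan form whose i-th block is the k_i×k_i matrix with eigenvalue μ_i on the diagonal and superdiagonal) has Smith normal form over the valuation ring of K_p equal to diag of its eigenvalues, so that the valuations of its invariant factors equal the valuations v_p(λ_1) ≤ ⋯ ≤ v_p(λ_n) of its eigenvalues. -/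
open Matrix Polynomial

/-!
Over the splitting field `K` of the characteristic polynomial, `A` can be triangularized with its
eigenvalues `λ₁, …, λₙ` on the diagonal in any prescribed order; take them in order of increasing
valuation. They are nonzero since `det A ≠ 0`, and integral over `ℤ_[p]` as roots of a monic
integer polynomial. Conjugating the triangular matrix `T` by `D = diag(τ⁰, …, τⁿ⁻¹)` multiplies
`T i j` by `τ ^ (j - i)`, so for a nonzero integral `τ` making every `τ * T i j / T i i` integral,
`D⁻¹ T D = diag(λ) N` with `N` unipotent upper triangular over the integral closure of `ℤ_[p]`.
Then `N⁻¹ = adj N` is integral of determinant `1`, and `(D⁻¹ T D) N⁻¹ = diag(λ)`.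
-/

section padicEigVal

variable (p : ℕ) [Fact p.Prime] {K : Type*} [Field K] [Algebra ℚ_[p] K]

theorem padicEigVal_one : padicEigVal p (1 : K) = 0 := by
  have h := minpoly.eq_X_sub_C K (1 : ℚ_[p])
  rw [map_one] at h
  have hv : (-1 : ℚ_[p]).valuation = 0 := by
    simpa [padicValInt] using Padic.valuation_intCast (p := p) (-1)
  simp [padicEigVal, h, hv]

variable {p} in
theorem padicEigVal_nonneg_of_isIntegral [Algebra ℤ_[p] K] [IsScalarTower ℤ_[p] ℚ_[p] K]
    {x : K} (hx : IsIntegral ℤ_[p] x) : 0 ≤ padicEigVal p x := by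
  -- `ℤ_[p]` is integrally closed, so the minimal polynomial of `x` has coefficients in `ℤ_[p]`.
  rw [padicEigVal, minpoly.isIntegrallyClosed_eq_field_fractions' ℚ_[p] hx, coeff_map]
  refine div_nonneg ?_ (Nat.cast_nonneg _)
  exact_mod_cast (Padic.norm_le_one_iff_val_nonneg _).mp (PadicInt.norm_le_one _)

end padicEigVal

theorem Multiset.exists_fin_enum_monotone {α β : Type*} [LinearOrder β] (f : α → β)
    {s : Multiset α} {n : ℕ} (hs : card s = n) :
    ∃ d : Fin n → α, Finset.univ.val.map d = s ∧ Monotone (f ∘ d) := by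
  obtain ⟨e, he⟩ : ∃ e : Fin n → α, Finset.univ.val.map e = s := by
    subst hs
    refine ⟨fun i => s.toList[i], ?_⟩
    rw [Fin.univ_val_map]
    conv_rhs => rw [← s.coe_toList]
    exact congrArg _ (List.ext_getElem (by simp) (by simp))
  refine ⟨e ∘ Tuple.sort (f ∘ e), ?_, Tuple.monotone_sort (f ∘ e)⟩
  rw [← Multiset.map_map, Multiset.map_univ_val_equiv, he]

theorem Polynomial.Splits.eq_prod_of_map_eq_roots {K : Type*} [Field K] {f : K[X]}
    (hf : f.Splits) (hm : f.Monic) {ι : Type*} [Fintype ι] {d : ι → K}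
    (hd : Finset.univ.val.map d = f.roots) : f = ∏ i, (X - C (d i)) := by
  rw [hf.eq_prod_roots_of_monic hm, ← hd, Multiset.map_map]
  rfl

theorem exists_ne_zero_isIntegral_mul (A K : Type*) [CommRing A] [IsDomain A] [Field K]
    [Algebra A K] [IsFractionRing A K] {L : Type*} [Field L] [Algebra K L] [Algebra A L]
    [IsScalarTower A K L] [FiniteDimensional K L] {ι : Type*} [Finite ι] (f : ι → L) :
    ∃ τ : L, τ ≠ 0 ∧ IsIntegral A τ ∧ ∀ i, IsIntegral A (τ * f i) := by
  obtain ⟨y, hy, hyf⟩ := exists_integral_multiples A K (Set.finite_range f).toFinset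
  have hinj : Function.Injective (algebraMap A L) := by
    rw [IsScalarTower.algebraMap_eq A K L]
    exact (algebraMap K L).injective.comp (IsFractionRing.injective A K)
  refine ⟨algebraMap A L y, (map_ne_zero_iff _ hinj).mpr hy, isIntegral_algebraMap, fun i => ?_⟩
  rw [← Algebra.smul_def]
  exact hyf _ (by simp)

namespace Matrix

section BlockDiag

variable {R : Type*} [CommRing R] {n : ℕ}

def oneBlockDiag (W : Matrix (Fin n) (Fin n) R) : Matrix (Fin (n + 1)) (Fin (n + 1)) R :=
  of (Fin.cons (Pi.single 0 1) fun i => Fin.cons 0 (W i))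

variable (W W' : Matrix (Fin n) (Fin n) R) (T : Matrix (Fin (n + 1)) (Fin (n + 1)) R)
  (i j : Fin n)

@[simp] theorem oneBlockDiag_zero_zero : oneBlockDiag W 0 0 = 1 := by simp [oneBlockDiag]
@[simp] theorem oneBlockDiag_zero_succ : oneBlockDiag W 0 j.succ = 0 := by simp [oneBlockDiag]
@[simp] theorem oneBlockDiag_succ_zero : oneBlockDiag W i.succ 0 = 0 := by simp [oneBlockDiag]
@[simp] theorem oneBlockDiag_succ_succ : oneBlockDiag W i.succ j.succ = W i j := by
  simp [oneBlockDiag]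

theorem oneBlockDiag_mul : oneBlockDiag W * oneBlockDiag W' = oneBlockDiag (W * W') := by
  ext i j
  cases i using Fin.cases <;> cases j using Fin.cases <;> simp [mul_apply, Fin.sum_univ_succ]

theorem oneBlockDiag_one : oneBlockDiag (1 : Matrix (Fin n) (Fin n) R) = 1 := by
  ext i j
  cases i using Fin.cases <;> cases j using Fin.cases <;>
    simp [one_apply, Fin.succ_ne_zero, (Fin.succ_ne_zero _).symm]

theorem inv_oneBlockDiag (hW : IsUnit W.det) : (oneBlockDiag W)⁻¹ = oneBlockDiag W⁻¹ :=
  inv_eq_right_inv (by rw [oneBlockDiag_mul, mul_nonsing_inv W hW, oneBlockDiag_one])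

theorem isUnit_det_oneBlockDiag (hW : IsUnit W.det) : IsUnit (oneBlockDiag W).det :=
  isUnit_det_of_right_inverse (by rw [oneBlockDiag_mul, mul_nonsing_inv W hW, oneBlockDiag_one])

theorem oneBlockDiag_mul_mul_oneBlockDiag_zero_zero :
    (oneBlockDiag W * T * oneBlockDiag W') 0 0 = T 0 0 := by
  simp [mul_apply, Fin.sum_univ_succ]

theorem oneBlockDiag_mul_mul_oneBlockDiag_succ_zero (hT : ∀ k : Fin n, T k.succ 0 = 0) :
    (oneBlockDiag W * T * oneBlockDiag W') i.succ 0 = 0 := by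
  simp [mul_apply, Fin.sum_univ_succ, hT]

theorem oneBlockDiag_mul_mul_oneBlockDiag_succ_succ :
    (oneBlockDiag W * T * oneBlockDiag W') i.succ j.succ =
      (W * T.submatrix Fin.succ Fin.succ * W') i j := by
  simp [mul_apply, Fin.sum_univ_succ]

end BlockDiag

theorem charpoly_eq_X_sub_C_mul_charpoly_submatrix_succ {R : Type*} [CommRing R] {n : ℕ}
    (T : Matrix (Fin (n + 1)) (Fin (n + 1)) R) (hT : ∀ i : Fin n, T i.succ 0 = 0) :
    T.charpoly = (X - C (T 0 0)) * (T.submatrix Fin.succ Fin.succ).charpoly := by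
  have hsub : (charmatrix T).submatrix Fin.succ Fin.succ =
      charmatrix (T.submatrix Fin.succ Fin.succ) := by
    ext i j
    by_cases h : i = j <;> simp [h]
  rw [charpoly, det_succ_column_zero, Fin.sum_univ_succ]
  simp [hT, hsub, charpoly]

theorem charpoly_inv_mul_mul {R : Type*} [CommRing R] {m : Type*} [Fintype m] [DecidableEq m]
    (B U : Matrix m m R) (hU : IsUnit U.det) : (U⁻¹ * B * U).charpoly = B.charpoly := by
  rw [mul_assoc, charpoly_mul_comm, mul_assoc, mul_nonsing_inv U hU, mul_one]

section Triangularization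

variable {L : Type*} [Field L] {n : ℕ}

theorem exists_isUnit_det_col_zero_eq {v : Fin (n + 1) → L} (hv : v ≠ 0) :
    ∃ V : Matrix (Fin (n + 1)) (Fin (n + 1)) L, IsUnit V.det ∧ ∀ i, V i 0 = v i := by
  obtain ⟨k, hk⟩ := Function.ne_iff.mp hv
  refine ⟨((1 : Matrix _ _ L).updateCol k v).submatrix id (Equiv.swap 0 k), ?_,
    fun i => by simp⟩
  -- `det (updateCol 1 k v) = cramer 1 v k = v k`
  rw [det_permute', ← cramer_apply, cramer_one]
  exact (Units.isUnit _).map (Int.castRingHom L) |>.mul (isUnit_iff_ne_zero.mpr hk)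

theorem exists_conj_col_zero_eq_single (B : Matrix (Fin (n + 1)) (Fin (n + 1)) L) {μ : L}
    (hμ : B.charpoly.IsRoot μ) :
    ∃ V : Matrix (Fin (n + 1)) (Fin (n + 1)) L, IsUnit V.det ∧
      ∀ i, (V⁻¹ * B * V) i 0 = (Pi.single 0 μ : Fin (n + 1) → L) i := by
  rw [← charpoly_toLin', ← Module.End.hasEigenvalue_iff_isRoot_charpoly] at hμ
  obtain ⟨v, hBv, hv⟩ := hμ.exists_hasEigenvector
  rw [Module.End.mem_eigenspace_iff, toLin'_apply] at hBv
  obtain ⟨V, hV, hVv⟩ := exists_isUnit_det_col_zero_eq hv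
  have hVe : V *ᵥ Pi.single 0 1 = v := by
    ext i
    simp [hVv]
  refine ⟨V, hV, congrFun (?_ : (V⁻¹ * B * V).col 0 = _)⟩
  calc (V⁻¹ * B * V).col 0 = V⁻¹ *ᵥ (B *ᵥ (V *ᵥ Pi.single 0 1)) := by
        rw [mulVec_mulVec, mulVec_mulVec, mulVec_single_one]
    _ = μ • ((V⁻¹ * V) *ᵥ Pi.single 0 1) := by
        rw [hVe, hBv, mulVec_smul, ← hVe, mulVec_mulVec]
    _ = Pi.single 0 μ := by
        rw [nonsing_inv_mul V hV, one_mulVec, ← Pi.single_smul', smul_eq_mul, mul_one]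

theorem exists_isUpperTriangular_inv_mul_mul :
    ∀ {n : ℕ} (B : Matrix (Fin n) (Fin n) L) (d : Fin n → L),
      B.charpoly = ∏ i, (X - C (d i)) →
      ∃ U : Matrix (Fin n) (Fin n) L, IsUnit U.det ∧ (U⁻¹ * B * U).IsUpperTriangular ∧
        ∀ i, (U⁻¹ * B * U) i i = d i
  | 0, _, _, _ => ⟨1, by simp, fun i => i.elim0, fun i => i.elim0⟩
  | n + 1, B, d, hB => by
    obtain ⟨V, hV, hcol⟩ := exists_conj_col_zero_eq_single B (μ := d 0)
      (by simp [hB, eval_prod, Finset.prod_eq_zero_iff, sub_eq_zero])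
    set T := V⁻¹ * B * V
    have hT0 : ∀ i : Fin n, T i.succ 0 = 0 := fun i => by simp [hcol, Fin.succ_ne_zero]
    have hT00 : T 0 0 = d 0 := by simp [hcol]
    have hT' : (T.submatrix Fin.succ Fin.succ).charpoly = ∏ i : Fin n, (X - C (d i.succ)) := by
      apply mul_left_cancel₀ (X_sub_C_ne_zero (d 0))
      rw [← Fin.prod_univ_succ (fun i => X - C (d i)), ← hB, ← charpoly_inv_mul_mul B V hV,
        charpoly_eq_X_sub_C_mul_charpoly_submatrix_succ T hT0, hT00]
    obtain ⟨W, hW, htri, hdiag⟩ := exists_isUpperTriangular_inv_mul_mul _ _ hT'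
    have hconj : (V * oneBlockDiag W)⁻¹ * B * (V * oneBlockDiag W) =
        oneBlockDiag W⁻¹ * T * oneBlockDiag W := by
      rw [mul_inv_rev, inv_oneBlockDiag W hW]
      simp only [T, mul_assoc]
    refine ⟨V * oneBlockDiag W, ?_, ?_, ?_⟩
    · rw [det_mul]
      exact hV.mul (isUnit_det_oneBlockDiag W hW)
    · intro i j hji
      rw [hconj]
      cases i using Fin.cases with
      | zero => exact absurd hji (Fin.not_lt_zero j)
      | succ i =>
        cases j using Fin.cases with
        | zero => exact oneBlockDiag_mul_mul_oneBlockDiag_succ_zero _ _ _ _ hT0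
        | succ j =>
          rw [oneBlockDiag_mul_mul_oneBlockDiag_succ_succ]
          exact htri (Fin.succ_lt_succ_iff.mp hji)
    · intro i
      rw [hconj]
      cases i using Fin.cases with
      | zero => rw [oneBlockDiag_mul_mul_oneBlockDiag_zero_zero, hT00]
      | succ i => rw [oneBlockDiag_mul_mul_oneBlockDiag_succ_succ, hdiag]

end Triangularization

theorem adjugate_apply_mem {R : Type*} [CommRing R] {S : Type*} [SetLike S R] [SubringClass S R]
    (s : S) {m : Type*} [Fintype m] [DecidableEq m] {M : Matrix m m R} (hM : ∀ i j, M i j ∈ s)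
    (i j : m) : M.adjugate i j ∈ s := by
  let M' : Matrix m m s := of fun i j => ⟨M i j, hM i j⟩
  have hM' : (SubringClass.subtype s).mapMatrix M' = M := rfl
  rw [← hM', ← RingHom.map_adjugate]
  exact (M'.adjugate i j).2

section Smith

variable {K : Type*} [Field K] {S : Type*} [SetLike S K] [SubringClass S K] {s : S}
  {m : Type*} [Fintype m] [DecidableEq m]

theorem IsUpperTriangular.exists_mul_eq_diagonal [LinearOrder m] {T : Matrix m m K}
    (hT : T.IsUpperTriangular) (hdiag : ∀ i, T i i ≠ 0) (hs : ∀ i j, T i j / T i i ∈ s) :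
    ∃ Q : Matrix m m K, (∀ i j, Q i j ∈ s) ∧ Q.det = 1 ∧
      T * Q = diagonal fun i => T i i := by
  set N := diagonal (fun i => (T i i)⁻¹) * T
  have hN : ∀ i j, N i j = T i j / T i i := fun i j => by simp [N, div_eq_inv_mul]
  have hNdet : N.det = 1 := by
    rw [det_of_isUpperTriangular ((blockTriangular_diagonal _).mul hT)]
    exact Finset.prod_eq_one fun i _ => (hN i i).trans (div_self (hdiag i))
  have hTN : T = (diagonal fun i => T i i) * N := by
    rw [← mul_assoc, diagonal_mul_diagonal]
    simp [hdiag]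
  refine ⟨N⁻¹, fun i j => ?_, by rw [det_nonsing_inv, hNdet, Ring.inverse_one], ?_⟩
  · rw [inv_def, hNdet, Ring.inverse_one, one_smul]
    exact adjugate_apply_mem s (fun i j => hN i j ▸ hs i j) i j
  · conv_lhs => rw [hTN, mul_assoc, mul_nonsing_inv N (by rw [hNdet]; exact isUnit_one), mul_one]

theorem IsUpperTriangular.exists_conj_mul_eq_diagonal {n : ℕ} {T : Matrix (Fin n) (Fin n) K}
    (hT : T.IsUpperTriangular) (hdiag : ∀ i, T i i ≠ 0) {τ : K} (hτ0 : τ ≠ 0)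
    (hτ : τ ∈ s) (hτT : ∀ i j, τ * (T i j / T i i) ∈ s) :
    ∃ D Q : Matrix (Fin n) (Fin n) K, IsUnit D.det ∧ (∀ i j, Q i j ∈ s) ∧ Q.det = 1 ∧
      D⁻¹ * T * D * Q = diagonal fun i => T i i := by
  set D : Matrix (Fin n) (Fin n) K := diagonal fun i => τ ^ (i : ℕ)
  have hD : IsUnit D.det := by
    rw [det_diagonal]
    exact isUnit_iff_ne_zero.mpr (Finset.prod_ne_zero_iff.mpr fun i _ => pow_ne_zero _ hτ0)
  have hDinv : D⁻¹ = diagonal fun i : Fin n => (τ ^ (i : ℕ))⁻¹ :=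
    inv_eq_left_inv (by simp [D, diagonal_mul_diagonal, hτ0])
  set M := D⁻¹ * T * D
  have hM : ∀ i j, M i j = (τ ^ (i : ℕ))⁻¹ * T i j * τ ^ (j : ℕ) := fun i j => by
    simp only [M, hDinv, D, mul_diagonal, diagonal_mul]
  have hMdiag : ∀ i, M i i = T i i := fun i => by
    rw [hM, mul_comm, ← mul_assoc, mul_inv_cancel₀ (pow_ne_zero _ hτ0), one_mul]
  have hMT : M.IsUpperTriangular := fun i j hji => by rw [hM, hT hji, mul_zero, zero_mul]
  have hMs : ∀ i j, M i j / M i i ∈ s := by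
    intro i j
    rcases lt_trichotomy i j with hij | rfl | hji
    · have hij' : (i : ℕ) < j := hij
      have hpow : τ ^ (j : ℕ) = τ ^ ((j : ℕ) - i - 1) * τ * τ ^ (i : ℕ) := by
        rw [← pow_succ, ← pow_add]
        congr 1
        omega
      have hMij : M i j / M i i = τ ^ ((j : ℕ) - i - 1) * (τ * (T i j / T i i)) := by
        rw [hMdiag, hM, hpow]
        field_simp
      rw [hMij]
      exact mul_mem (pow_mem hτ _) (hτT i j)
    · rw [hMdiag, div_self (hdiag i)]
      exact one_mem s
    · rw [hMT hji, zero_div]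
      exact zero_mem s
  obtain ⟨Q, hQs, hQdet, hMQ⟩ := hMT.exists_mul_eq_diagonal (fun i => hMdiag i ▸ hdiag i) hMs
  exact ⟨D, Q, hD, hQs, hQdet, by simpa only [hMdiag] using hMQ⟩

end Smith

theorem IsUpperTriangular.exists_conj_mul_eq_diagonal_of_isIntegral (A K : Type*) [CommRing A]
    [IsDomain A] [Field K] [Algebra A K] [IsFractionRing A K] {L : Type*} [Field L] [Algebra K L]
    [Algebra A L] [IsScalarTower A K L] [FiniteDimensional K L] {n : ℕ}
    {T : Matrix (Fin n) (Fin n) L} (hT : T.IsUpperTriangular) (hdiag : ∀ i, T i i ≠ 0) :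
    ∃ D Q : Matrix (Fin n) (Fin n) L, IsUnit D.det ∧ (∀ i j, IsIntegral A (Q i j)) ∧
      Q.det = 1 ∧ D⁻¹ * T * D * Q = diagonal fun i => T i i := by
  obtain ⟨τ, hτ0, hτ, hτT⟩ :=
    exists_ne_zero_isIntegral_mul A K fun ij : Fin n × Fin n => T ij.1 ij.2 / T ij.1 ij.1
  exact hT.exists_conj_mul_eq_diagonal (s := integralClosure A L) hdiag hτ0 hτ
    fun i j => hτT (i, j)

theorem charpoly_map_intCast {n : Type*} [Fintype n] [DecidableEq n] {F K : Type*} [CommRing F]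
    [CommRing K] [Algebra F K] (A : Matrix n n ℤ) :
    (A.map (Int.cast : ℤ → K)).charpoly =
      (A.charpoly.map (Int.castRingHom F)).map (algebraMap F K) := by
  rw [Polynomial.map_map, RingHom.ext_int ((algebraMap F K).comp _) (Int.castRingHom K)]
  exact charpoly_map A (Int.castRingHom K)

theorem isIntegral_of_mem_roots_charpoly_map {R K : Type*} [CommRing R] [CommRing K] [IsDomain K]
    [Algebra R K] {n : Type*} [Fintype n] [DecidableEq n] (A : Matrix n n R) {x : K}
    (hx : x ∈ (A.map (algebraMap R K)).charpoly.roots) : IsIntegral R x := by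
  refine ⟨A.charpoly, A.charpoly_monic, ?_⟩
  rw [eval₂_eq_eval_map, ← charpoly_map]
  exact (mem_roots'.mp hx).2

theorem ne_zero_of_mem_roots_charpoly {R : Type*} [CommRing R] [IsDomain R] {n : Type*}
    [Fintype n] [DecidableEq n] {B : Matrix n n R} (hB : B.det ≠ 0) {x : R}
    (hx : x ∈ B.charpoly.roots) : x ≠ 0 := by
  rintro rfl
  rw [det_eq_sign_charpoly_coeff, coeff_zero_eq_eval_zero, (mem_roots'.mp hx).2, mul_zero] at hB
  exact hB rfl

end Matrix

theorem exists_similar_pCorrespondent_general (n : ℕ) (p : ℕ) [Fact p.Prime]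
    (A : Matrix (Fin n) (Fin n) ℤ) (hA : A.det ≠ 0) :
    ∃ (K : Type) (_ : Field K) (_ : Algebra ℚ_[p] K) (_ : FiniteDimensional ℚ_[p] K)
      (U : Matrix (Fin n) (Fin n) K),
      IsUnit U.det ∧
      (((A.map (Int.cast : ℤ → K)).charpoly).roots.card = n) ∧
      ∃ (P Q : Matrix (Fin n) (Fin n) K) (d : Fin n → K),
        (∀ i j, 0 ≤ padicEigVal p (P i j)) ∧ P.det ≠ 0 ∧ padicEigVal p P.det = 0 ∧
        (∀ i j, 0 ≤ padicEigVal p (Q i j)) ∧ Q.det ≠ 0 ∧ padicEigVal p Q.det = 0 ∧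
        (∀ i, 0 ≤ padicEigVal p (d i)) ∧
        (∀ i j : Fin n, i ≤ j → padicEigVal p (d i) ≤ padicEigVal p (d j)) ∧
        P * (U⁻¹ * A.map (Int.cast : ℤ → K) * U) * Q = Matrix.diagonal d ∧
        Multiset.map (padicEigVal p) ((A.map (Int.cast : ℤ → K)).charpoly).roots
          = Multiset.map (fun i => padicEigVal p (d i)) Finset.univ.val := by
  let K := (A.charpoly.map (Int.castRingHom ℚ_[p])).SplittingField
  let B : Matrix (Fin n) (Fin n) K := A.map Int.cast
  have hsplit : B.charpoly.Splits := by
    rw [charpoly_map_intCast (F := ℚ_[p])]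
    exact SplittingField.splits _
  have hcard : B.charpoly.roots.card = n := by
    rw [splits_iff_card_roots.mp hsplit, charpoly_natDegree_eq_dim, Fintype.card_fin]
  have hB : B.det ≠ 0 := by
    rw [← Int.cast_det]
    exact_mod_cast hA
  obtain ⟨d, hd, hd_mono⟩ := Multiset.exists_fin_enum_monotone (padicEigVal p) hcard
  have hd_mem (i : Fin n) : d i ∈ B.charpoly.roots := hd ▸ Multiset.mem_map_of_mem d (by simp)
  obtain ⟨U₀, hU₀, hT, hTdiag⟩ := exists_isUpperTriangular_inv_mul_mul B d
    (hsplit.eq_prod_of_map_eq_roots B.charpoly_monic hd)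
  obtain ⟨D, Q, hD, hQ, hQdet, hTQ⟩ :=
    hT.exists_conj_mul_eq_diagonal_of_isIntegral ℤ_[p] ℚ_[p] fun i =>
      hTdiag i ▸ ne_zero_of_mem_roots_charpoly hB (hd_mem i)
  refine ⟨K, inferInstance, inferInstance, inferInstance, U₀ * D,
    by rw [det_mul]; exact hU₀.mul hD, hcard, 1, Q, d,
    fun i j => padicEigVal_nonneg_of_isIntegral
      (by rw [one_apply]; split_ifs; exacts [isIntegral_one, isIntegral_zero]),
    by simp, by simp [padicEigVal_one], fun i j => padicEigVal_nonneg_of_isIntegral (hQ i j),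
    by simp [hQdet], by simp [hQdet, padicEigVal_one],
    fun i => padicEigVal_nonneg_of_isIntegral
      (isIntegral_of_mem_roots_charpoly_map A (hd_mem i)).tower_top,
    fun i j hij => hd_mono hij, ?_, by rw [← hd, Multiset.map_map]; rfl⟩
  rw [one_mul, Matrix.mul_inv_rev, ← congrArg diagonal (funext hTdiag), ← hTQ]
  simp only [B, mul_assoc]

/-- For a non-singular `A ∈ ℤ^{n×n}` there is a finite
extension `K` of `ℚ_p` and an invertible `U` over `K` such that `U⁻¹ A U`
(similar to `A`) is `p`-correspondent over `K`: it admits a Smith normal form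
`diagonal d` over the valuation ring of `K` (`P, Q` unimodular over the
valuation ring, i.e. with integral entries and determinant of valuation `0`,
and `v_p(d 1) ≤ ⋯ ≤ v_p(d n)`), whose diagonal valuations are exactly the
valuations of the eigenvalues of `A` (the roots of the characteristic
polynomial, all of which lie in `K`). -/
theorem exists_similar_pCorrespondent (n : ℕ) (hn : 0 < n) (p : ℕ) [Fact p.Prime]
    (A : Matrix (Fin n) (Fin n) ℤ) (hA : A.det ≠ 0) :
    ∃ (K : Type) (_ : Field K) (_ : Algebra ℚ_[p] K) (_ : FiniteDimensional ℚ_[p] K)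
      (U : Matrix (Fin n) (Fin n) K),
      IsUnit U.det ∧
      (((A.map (Int.cast : ℤ → K)).charpoly).roots.card = n) ∧
      ∃ (P Q : Matrix (Fin n) (Fin n) K) (d : Fin n → K),
        (∀ i j, 0 ≤ padicEigVal p (P i j)) ∧ P.det ≠ 0 ∧ padicEigVal p P.det = 0 ∧
        (∀ i j, 0 ≤ padicEigVal p (Q i j)) ∧ Q.det ≠ 0 ∧ padicEigVal p Q.det = 0 ∧
        (∀ i, 0 ≤ padicEigVal p (d i)) ∧
        (∀ i j : Fin n, i ≤ j → padicEigVal p (d i) ≤ padicEigVal p (d j)) ∧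
        P * (U⁻¹ * A.map (Int.cast : ℤ → K) * U) * Q = Matrix.diagonal d ∧
        Multiset.map (padicEigVal p) ((A.map (Int.cast : ℤ → K)).charpoly).roots
          = Multiset.map (fun i => padicEigVal p (d i)) Finset.univ.val :=
  exists_similar_pCorrespondent_general n p A hA
end

section
/- Fix an integer n ≥ 1, a prime p, and integers 0 ≤ e_1 ≤ ⋯ ≤ e_n < ∞, and let m > e_1 + ⋯ + e_n. Let S = diag(p^{e_1},…,p^{e_n}) and let A ∈ 𝒮_S^m. If L, R ∈ ℤ^{n×n} are any integer matrices satisfying A = (L S R) rem p^m (entrywise remainder on division by p^m), then v_p(det L) = v_p(det R) = 0; in particular L and R are invertible modulo p^m. -/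
open Matrix

/-- `𝒮_S^m` for `S = diag(p^{e 1}, …, p^{e n})`: the set of `n × n` integer
matrices with entries in `[0, p^m)` whose Smith normal form `diag s` satisfies
`v_p(s i) = e i` for all `i`. -/
def SClass (n p m : ℕ) (e : Fin n → ℕ) : Set (Matrix (Fin n) (Fin n) ℤ) :=
  {A | (∀ i j, 0 ≤ A i j ∧ A i j < (p : ℤ) ^ m) ∧
    ∃ s : Fin n → ℤ, IsSmithDiag A s ∧
      ∀ i, (p : ℤ) ^ (e i) ∣ s i ∧ ¬ (p : ℤ) ^ (e i + 1) ∣ s i}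

/-!
The determinant of a matrix in `𝒮_S^m` has `p`-adic valuation exactly `e 1 + ⋯ + e n < m`, and
reducing modulo `p ^ m` does not change the determinant modulo `p ^ m`, so
`det A ≡ p ^ (e 1 + ⋯ + e n) * det L * det R (mod p ^ m)`. Comparing valuations below `m` forces
`p ∤ det L * det R`.
-/

theorem Matrix.det_sub_mem_of_sub_mem {n R : Type*} [Fintype n] [DecidableEq n] [CommRing R]
    (I : Ideal R) {A B : Matrix n n R} (h : ∀ i j, A i j - B i j ∈ I) : A.det - B.det ∈ I := by
  rw [← Ideal.Quotient.eq, RingHom.map_det, RingHom.map_det]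
  congr 1
  ext i j
  exact Ideal.Quotient.eq.mpr (h i j)

theorem exists_eq_pow_mul_not_dvd {M : Type*} [CommMonoid M] {p s : M} {k : ℕ}
    (hdvd : p ^ k ∣ s) (hndvd : ¬ p ^ (k + 1) ∣ s) : ∃ t, s = p ^ k * t ∧ ¬ p ∣ t := by
  obtain ⟨t, rfl⟩ := hdvd
  exact ⟨t, rfl, fun h => hndvd (pow_succ p k ▸ mul_dvd_mul_left _ h)⟩

theorem Prime.not_dvd_of_pow_mul_sub_pow_mul {R : Type*} [CommRing R] [IsDomain R] {p : R}
    (hp : Prime p) {k m : ℕ} (hkm : k < m) {a b : R} (h : p ^ m ∣ p ^ k * a - p ^ k * b)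
    (ha : ¬ p ∣ a) : ¬ p ∣ b := by
  have hab : p ^ (m - k) ∣ a - b := by
    rw [← mul_sub, ← Nat.add_sub_cancel' hkm.le, pow_add] at h
    exact (mul_dvd_mul_iff_left (pow_ne_zero k hp.ne_zero)).mp h
  have hab' : p ∣ a - b := (dvd_pow_self p (Nat.sub_ne_zero_of_lt hkm)).trans hab
  exact fun hb => ha (by simpa using dvd_add hab' hb)

theorem exists_det_eq_pow_sum_mul_of_mem_SClass {n p m : ℕ} (hp : p.Prime) {e : Fin n → ℕ}
    {A : Matrix (Fin n) (Fin n) ℤ} (hA : A ∈ SClass n p m e) :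
    ∃ c : ℤ, A.det = (p : ℤ) ^ (∑ i, e i) * c ∧ ¬ (p : ℤ) ∣ c := by
  have hpZ : Prime (p : ℤ) := Nat.prime_iff_prime_int.mp hp
  obtain ⟨-, s, ⟨⟨P, Q, hP, hQ, rfl⟩, -⟩, hs⟩ := hA
  choose t hst ht using fun i => exists_eq_pow_mul_not_dvd (hs i).1 (hs i).2
  refine ⟨P.det * (∏ i, t i) * Q.det, ?_, ?_⟩
  · simp only [det_mul, det_diagonal, hst, Finset.prod_mul_distrib, Finset.prod_pow_eq_pow_sum]
    ring
  · have hnP : ¬ (p : ℤ) ∣ P.det := fun h => hpZ.not_isUnit (isUnit_of_dvd_unit h hP)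
    have hnQ : ¬ (p : ℤ) ∣ Q.det := fun h => hpZ.not_isUnit (isUnit_of_dvd_unit h hQ)
    have hnt : ¬ (p : ℤ) ∣ ∏ i, t i := fun h => by
      obtain ⟨i, -, hi⟩ := (hpZ.dvd_finsetProd_iff _).mp h
      exact ht i hi
    simp only [hpZ.dvd_mul, not_or]
    exact ⟨⟨hnP, hnt⟩, hnQ⟩

theorem isUnit_intCast_zmod_pow_of_not_dvd {p : ℕ} (hp : p.Prime) (m : ℕ) {d : ℤ}
    (hd : ¬ (p : ℤ) ∣ d) : IsUnit (d : ZMod (p ^ m)) := by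
  rw [ZMod.coe_int_isUnit_iff_isCoprime, Nat.cast_pow]
  exact ((Nat.prime_iff_prime_int.mp hp).coprime_iff_not_dvd.mpr hd).pow_left

theorem lsr_rem_unimodular_general (n : ℕ) (p : ℕ) (hp : p.Prime)
    (e : Fin n → ℕ) (m : ℕ) (hm : (∑ i, e i) < m)
    (A : Matrix (Fin n) (Fin n) ℤ) (hA : A ∈ SClass n p m e)
    (L R : Matrix (Fin n) (Fin n) ℤ)
    (hLSR : A = (L * Matrix.diagonal (fun i => (p : ℤ) ^ (e i)) * R).map
        (fun x => x % (p : ℤ) ^ m)) :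
    (¬ (p : ℤ) ∣ L.det ∧ ¬ (p : ℤ) ∣ R.det) ∧
      IsUnit ((L.map (Int.cast : ℤ → ZMod (p ^ m))).det) ∧
      IsUnit ((R.map (Int.cast : ℤ → ZMod (p ^ m))).det) := by
  obtain ⟨c, hdetA, hc⟩ := exists_det_eq_pow_sum_mul_of_mem_SClass hp hA
  have hdetLSR : (L * diagonal (fun i => (p : ℤ) ^ (e i)) * R).det =
      (p : ℤ) ^ (∑ i, e i) * (L.det * R.det) := by
    rw [det_mul, det_mul, det_diagonal, Finset.prod_pow_eq_pow_sum]
    ring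
  have hcong : (p : ℤ) ^ m ∣ A.det - (L * diagonal (fun i => (p : ℤ) ^ (e i)) * R).det := by
    rw [← Ideal.mem_span_singleton]
    refine det_sub_mem_of_sub_mem _ fun i j => Ideal.mem_span_singleton.mpr ?_
    rw [hLSR]
    exact (Int.mod_modEq _ _).symm.dvd
  rw [hdetA, hdetLSR] at hcong
  have hLR : ¬ (p : ℤ) ∣ L.det * R.det :=
    (Nat.prime_iff_prime_int.mp hp).not_dvd_of_pow_mul_sub_pow_mul hm hcong hc
  have hL : ¬ (p : ℤ) ∣ L.det := fun h => hLR (h.mul_right _)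
  have hR : ¬ (p : ℤ) ∣ R.det := fun h => hLR (h.mul_left _)
  simp only [← Int.cast_det]
  exact ⟨⟨hL, hR⟩, isUnit_intCast_zmod_pow_of_not_dvd hp m hL,
    isUnit_intCast_zmod_pow_of_not_dvd hp m hR⟩

/-- Let `0 ≤ e 1 ≤ ⋯ ≤ e n`, `m > e 1 + ⋯ + e n`,
`S = diag(p^{e 1}, …, p^{e n})` and `A ∈ 𝒮_S^m`.  If `L, R ∈ ℤ^{n×n}` satisfy
`A = (L * S * R) rem p^m` (entrywise remainder), then
`v_p(det L) = v_p(det R) = 0` (i.e. `p ∤ det L` and `p ∤ det R`); in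
particular `L` and `R` are invertible modulo `p^m`. -/
theorem lsr_rem_unimodular (n : ℕ) (hn : 1 ≤ n) (p : ℕ) (hp : p.Prime)
    (e : Fin n → ℕ) (he : Monotone e) (m : ℕ) (hm : (∑ i, e i) < m)
    (A : Matrix (Fin n) (Fin n) ℤ) (hA : A ∈ SClass n p m e)
    (L R : Matrix (Fin n) (Fin n) ℤ)
    (hLSR : A = (L * Matrix.diagonal (fun i => (p : ℤ) ^ (e i)) * R).map
        (fun x => x % (p : ℤ) ^ m)) :
    (¬ (p : ℤ) ∣ L.det ∧ ¬ (p : ℤ) ∣ R.det) ∧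
      IsUnit ((L.map (Int.cast : ℤ → ZMod (p ^ m))).det) ∧
      IsUnit ((R.map (Int.cast : ℤ → ZMod (p ^ m))).det) :=
  lsr_rem_unimodular_general n p hp e m hm A hA L R hLSR
end

section
/- Let A ∈ ℤ^{n×n} be a non-singular matrix, p a prime, m > v_p(det A) an integer, and Ā = A rem p^m (entrywise remainder on division by p^m). If the invariant factors of A are s_1,…,s_n and the invariant factors of Ā are s̄_1,…,s̄_n, then v_p(s_i) = v_p(s̄_i) for all i ∈ {1,…,n}. -/
open Matrix

lemma gcd_prime_pow {p : ℕ} (hp : p.Prime) (t : ℕ) {a : ℕ} (ha : a ≠ 0) :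
    Nat.gcd (p ^ t) a = p ^ min t (a.factorization p) := by
  obtain ⟨j, hjt, hj⟩ := (Nat.dvd_prime_pow hp).mp (Nat.gcd_dvd_left (p ^ t) a)
  have hpt : p ^ t ≠ 0 := pow_ne_zero _ hp.pos.ne'
  have h1 : (Nat.gcd (p ^ t) a).factorization p = min t (a.factorization p) := by
    rw [Nat.factorization_gcd hpt ha, Finsupp.inf_apply, hp.factorization_pow]
    simp
  rw [hj] at h1 ⊢
  rw [hp.factorization_pow] at h1
  simp at h1
  rw [h1]

lemma addOrderOf_intCast_zmod {p : ℕ} (hp : p.Prime) (t : ℕ) {a : ℤ} (ha : a ≠ 0) :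
    addOrderOf ((a : ZMod (p ^ t))) = p ^ (t - min t (padicValInt p a)) := by
  have hpt : p ^ t ≠ 0 := pow_ne_zero _ hp.pos.ne'
  have h1 : addOrderOf ((a : ZMod (p ^ t))) = addOrderOf ((a.natAbs : ZMod (p ^ t))) := by
    rcases Int.natAbs_eq a with h | h
    · conv_lhs => rw [h, Int.cast_natCast]
    · conv_lhs => rw [h, Int.cast_neg, Int.cast_natCast]
      rw [addOrderOf_neg]
  rw [h1, ZMod.addOrderOf_coe _ hpt, gcd_prime_pow hp t (Int.natAbs_ne_zero.mpr ha),
    padicValInt, ← Nat.factorization_def _ hp,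
    Nat.pow_div (min_le_left _ _) hp.pos]

lemma card_mul_range {N : ℕ} (hN : N ≠ 0) (c : ZMod N) :
    Nat.card (Set.range fun x : ZMod N => c * x) = addOrderOf c := by
  haveI : NeZero N := ⟨hN⟩
  have h : (Set.range fun x : ZMod N => c * x) = (AddSubgroup.zmultiples c : Set (ZMod N)) := by
    ext y
    simp only [Set.mem_range, SetLike.mem_coe, AddSubgroup.mem_zmultiples_iff]
    constructor
    · rintro ⟨x, rfl⟩
      refine ⟨(x.val : ℤ), ?_⟩
      rw [zsmul_eq_mul]
      push_cast
      rw [ZMod.natCast_rightInverse x]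
      ring
    · rintro ⟨k, rfl⟩
      exact ⟨(k : ZMod N), by rw [zsmul_eq_mul]; ring⟩
  rw [h]
  exact Nat.card_zmultiples c


lemma card_range_snf {n N : ℕ} (hN : N ≠ 0) (B : Matrix (Fin n) (Fin n) ℤ)
    (s : Fin n → ℤ) (h : IsSmithDiag B s) :
    Nat.card (Set.range (B.map fun x : ℤ => (x : ZMod N)).mulVec)
      = ∏ i, addOrderOf ((s i : ZMod N)) := by
  haveI : NeZero N := ⟨hN⟩
  obtain ⟨⟨P, Q, hP, hQ, hB⟩, -⟩ := h
  set f : ℤ →+* ZMod N := Int.castRingHom (ZMod N) with hf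
  have hmap : B.map (fun x : ℤ => (x : ZMod N))
      = P.map f * diagonal (fun i => ((s i : ℤ) : ZMod N)) * Q.map f := by
    have h0 : B.map (fun x : ℤ => (x : ZMod N)) = B.map ⇑f := rfl
    rw [h0, hB, Matrix.map_mul, Matrix.map_mul, Matrix.diagonal_map (map_zero f)]
    rfl
  have hPdet : IsUnit (P.map ⇑f).det := by
    have h0 : f P.det = (P.map ⇑f).det := RingHom.map_det f P
    rw [← h0]; exact hP.map f
  have hQdet : IsUnit (Q.map ⇑f).det := by
    have h0 : f Q.det = (Q.map ⇑f).det := RingHom.map_det f Q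
    rw [← h0]; exact hQ.map f
  have hPinj : Function.Injective (P.map f).mulVec := by
    intro x y hxy
    have h2 := congrArg ((P.map f)⁻¹.mulVec) hxy
    simpa [Matrix.mulVec_mulVec, Matrix.nonsing_inv_mul _ hPdet] using h2
  have hQsurj : Function.Surjective (Q.map f).mulVec := by
    haveI := ((Matrix.isUnit_iff_isUnit_det _).mpr hQdet).invertible
    exact Matrix.mulVec_surjective_of_invertible _
  set D : Matrix (Fin n) (Fin n) (ZMod N) := diagonal (fun i => ((s i : ℤ) : ZMod N)) with hD
  have hcomp : (B.map fun x : ℤ => (x : ZMod N)).mulVec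
      = (P.map f).mulVec ∘ D.mulVec ∘ (Q.map f).mulVec := by
    funext x
    simp only [Function.comp_apply, Matrix.mulVec_mulVec, hmap, mul_assoc]
  rw [hcomp, Set.range_comp, Function.Surjective.range_comp hQsurj,
    Nat.card_image_of_injective hPinj]
  have hDpi : D.mulVec = Pi.map (fun i (x : ZMod N) => ((s i : ℤ) : ZMod N) * x) := by
    funext x
    funext j
    rw [hD, Matrix.mulVec_diagonal]
    rfl
  rw [hDpi, Set.range_piMap]
  rw [Nat.card_congr (Equiv.Set.univPi _), Nat.card_pi]
  exact Finset.prod_congr rfl fun i _ => card_mul_range hN _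

lemma mono_count {n : ℕ} (v : Fin n → ℕ) (hmono : ∀ i j : Fin n, i ≤ j → v i ≤ v j)
    (t : ℕ) (i : Fin n) :
    t ≤ v i ↔ n - i.val ≤ (Finset.univ.filter fun j => t ≤ v j).card := by
  constructor
  · intro h
    have hsub : Finset.Ici i ⊆ Finset.univ.filter fun j => t ≤ v j := fun j hj =>
      Finset.mem_filter.mpr ⟨Finset.mem_univ _, le_trans h (hmono i j (Finset.mem_Ici.mp hj))⟩
    calc n - i.val = (Finset.Ici i).card := (Fin.card_Ici i).symm
      _ ≤ _ := Finset.card_le_card hsub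
  · intro h
    by_contra hv
    push_neg at hv
    have hsub : (Finset.univ.filter fun j => t ≤ v j) ⊆ Finset.Ioi i := by
      intro j hj
      rw [Finset.mem_Ioi]
      by_contra hji
      push_neg at hji
      exact absurd ((Finset.mem_filter.mp hj).2.trans (hmono j i hji)) (not_le.mpr hv)
    have hc := Finset.card_le_card hsub
    rw [Fin.card_Ioi] at hc
    have := i.isLt
    omega

lemma sum_min_succ {n : ℕ} (v : Fin n → ℕ) (t : ℕ) :
    ∑ i, min (t + 1) (v i) = ∑ i, min t (v i) + (Finset.univ.filter fun i => t + 1 ≤ v i).card := by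
  rw [Finset.card_filter, ← Finset.sum_add_distrib]
  refine Finset.sum_congr rfl fun i _ => ?_
  split_ifs with h <;> omega

lemma eq_of_sum_min {n : ℕ} (v w : Fin n → ℕ)
    (hvm : ∀ i j : Fin n, i ≤ j → v i ≤ v j) (hwm : ∀ i j : Fin n, i ≤ j → w i ≤ w j)
    (hsum : ∀ t, ∑ i, min t (v i) = ∑ i, min t (w i)) : v = w := by
  have hcount : ∀ t, (Finset.univ.filter fun i => t ≤ v i).card
      = (Finset.univ.filter fun i => t ≤ w i).card := by
    intro t
    cases t with
    | zero => simp
    | succ t =>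
      have h1 := sum_min_succ v t
      have h2 := sum_min_succ w t
      have h3 := hsum t
      have h4 := hsum (t + 1)
      omega
  funext i
  have h1 : v i ≤ w i := by
    rw [mono_count w hwm (v i) i, ← hcount (v i), ← mono_count v hvm (v i) i]
  have h2 : w i ≤ v i := by
    rw [mono_count v hvm (w i) i, hcount (w i), ← mono_count w hwm (w i) i]
  omega

/-- Let `A ∈ ℤ^{n×n}` be non-singular, `p` prime,
`m > v_p(det A)`, and `Ā = A rem p^m` (entrywise).  If `s` and `s̄` are the
invariant factors of `A` and `Ā` respectively, then `v_p(s i) = v_p(s̄ i)` for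
all `i` (equality of valuations expressed via divisibility by all powers of
`p`). -/
theorem snf_val_rem (n p : ℕ) (hp : p.Prime) (A : Matrix (Fin n) (Fin n) ℤ)
    (hA : A.det ≠ 0) (m : ℕ) (hm : padicValInt p A.det < m)
    (s sb : Fin n → ℤ) (hs : IsSmithDiag A s)
    (hsb : IsSmithDiag (A.map (fun x => x % (p : ℤ) ^ m)) sb) :
    ∀ i : Fin n, ∀ k : ℕ, ((p : ℤ) ^ k ∣ s i ↔ (p : ℤ) ^ k ∣ sb i) := by
  haveI : Fact p.Prime := ⟨hp⟩
  set Ab := A.map (fun x => x % (p : ℤ) ^ m) with hAbdef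
  -- the reductions of `A` and `Ab` agree modulo `p ^ t` for `t ≤ m`
  have hmap_eq : ∀ t : ℕ, t ≤ m →
      Ab.map (fun x : ℤ => (x : ZMod (p ^ t))) = A.map (fun x : ℤ => (x : ZMod (p ^ t))) := by
    intro t ht
    ext i j
    simp only [Matrix.map_apply, hAbdef]
    rw [ZMod.intCast_eq_intCast_iff']
    push_cast
    rw [Int.emod_emod_of_dvd _ (pow_dvd_pow (p : ℤ) ht)]
  obtain ⟨⟨P, Q, hP, hQ, hAeq⟩, hchain⟩ := id hs
  obtain ⟨⟨P', Q', hP', hQ', hAbeq⟩, hchain'⟩ := id hsb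
  have hdetA : A.det = P.det * (∏ i, s i) * Q.det := by
    rw [hAeq, Matrix.det_mul, Matrix.det_mul, Matrix.det_diagonal]
  have hdetAb : Ab.det = P'.det * (∏ i, sb i) * Q'.det := by
    rw [hAbeq, Matrix.det_mul, Matrix.det_mul, Matrix.det_diagonal]
  -- `det Ab ≡ det A  [ZMOD p^m]`
  have hdiff : (p : ℤ) ^ m ∣ Ab.det - A.det := by
    have hmm := hmap_eq m le_rfl
    have e1 : ((Ab.det : ℤ) : ZMod (p ^ m)) = (Ab.map (fun x : ℤ => (x : ZMod (p ^ m)))).det :=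
      RingHom.map_det (Int.castRingHom (ZMod (p ^ m))) Ab
    have e2 : ((A.det : ℤ) : ZMod (p ^ m)) = (A.map (fun x : ℤ => (x : ZMod (p ^ m)))).det :=
      RingHom.map_det (Int.castRingHom (ZMod (p ^ m))) A
    have h2 : ((Ab.det - A.det : ℤ) : ZMod (p ^ m)) = 0 := by
      rw [Int.cast_sub, e1, e2, hmm, sub_self]
    have h3 := (ZMod.intCast_zmod_eq_zero_iff_dvd _ _).mp h2
    push_cast at h3
    exact h3
  have hpm_not_dvd : ¬ (p : ℤ) ^ m ∣ A.det := by
    intro hdvd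
    rcases (padicValInt_dvd_iff m A.det).mp hdvd with h | h
    · exact hA h
    · omega
  have hAbne : Ab.det ≠ 0 := by
    intro h0
    apply hpm_not_dvd
    have h1 := hdiff
    rw [h0, zero_sub, dvd_neg] at h1
    exact h1
  have hpm_not_dvd' : ¬ (p : ℤ) ^ m ∣ Ab.det := by
    intro hdvd
    apply hpm_not_dvd
    have h1 := dvd_sub hdvd hdiff
    simpa using h1
  -- nonvanishing of the invariant factors
  have hsne : ∀ i, s i ≠ 0 := by
    intro i hi
    exact hA (by rw [hdetA, Finset.prod_eq_zero (Finset.mem_univ i) hi]; ring)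
  have hsbne : ∀ i, sb i ≠ 0 := by
    intro i hi
    exact hAbne (by rw [hdetAb, Finset.prod_eq_zero (Finset.mem_univ i) hi]; ring)
  have hs_dvd_det : ∀ i, s i ∣ A.det := by
    intro i
    rw [hdetA]
    exact ((Finset.dvd_prod_of_mem s (Finset.mem_univ i)).mul_left P.det).mul_right Q.det
  have hsb_dvd_det : ∀ i, sb i ∣ Ab.det := by
    intro i
    rw [hdetAb]
    exact ((Finset.dvd_prod_of_mem sb (Finset.mem_univ i)).mul_left P'.det).mul_right Q'.det
  set v : Fin n → ℕ := fun i => padicValInt p (s i) with hvdef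
  set w : Fin n → ℕ := fun i => padicValInt p (sb i) with hwdef
  -- bounds
  have hvlt : ∀ i, v i < m := by
    intro i
    by_contra hge
    push_neg at hge
    exact hpm_not_dvd ((pow_dvd_pow (p : ℤ) hge).trans
      ((padicValInt_dvd (s i)).trans (hs_dvd_det i)))
  have hwlt : ∀ i, w i < m := by
    intro i
    by_contra hge
    push_neg at hge
    exact hpm_not_dvd' ((pow_dvd_pow (p : ℤ) hge).trans
      ((padicValInt_dvd (sb i)).trans (hsb_dvd_det i)))
  -- monotonicity
  have hvm : ∀ i j : Fin n, i ≤ j → v i ≤ v j := by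
    intro i j hij
    have h1 : (p : ℤ) ^ (v i) ∣ s j := dvd_trans (padicValInt_dvd (s i)) (hchain i j hij)
    rcases (padicValInt_dvd_iff (v i) (s j)).mp h1 with h | h
    · exact absurd h (hsne j)
    · exact h
  have hwm : ∀ i j : Fin n, i ≤ j → w i ≤ w j := by
    intro i j hij
    have h1 : (p : ℤ) ^ (w i) ∣ sb j := dvd_trans (padicValInt_dvd (sb i)) (hchain' i j hij)
    rcases (padicValInt_dvd_iff (w i) (sb j)).mp h1 with h | h
    · exact absurd h (hsbne j)
    · exact h
  -- sums of truncated valuations agree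
  have hsum : ∀ t, t ≤ m → ∑ i, min t (v i) = ∑ i, min t (w i) := by
    intro t ht
    have hc1 := card_range_snf (N := p ^ t) (pow_ne_zero t hp.pos.ne') A s hs
    have hc2 := card_range_snf (N := p ^ t) (pow_ne_zero t hp.pos.ne') Ab sb hsb
    rw [hmap_eq t ht] at hc2
    have h3 : ∏ i, addOrderOf ((s i : ZMod (p ^ t)))
        = ∏ i, addOrderOf ((sb i : ZMod (p ^ t))) := by rw [← hc1, ← hc2]
    rw [Finset.prod_congr rfl (fun i _ => addOrderOf_intCast_zmod hp t (hsne i)),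
      Finset.prod_congr rfl (fun i _ => addOrderOf_intCast_zmod hp t (hsbne i)),
      Finset.prod_pow_eq_pow_sum, Finset.prod_pow_eq_pow_sum] at h3
    have h4 : ∑ i : Fin n, (t - min t (v i)) = ∑ i : Fin n, (t - min t (w i)) :=
      Nat.pow_right_injective hp.two_le h3
    have h5 : ∀ u : Fin n → ℕ,
        ∑ i, min t (u i) + ∑ i : Fin n, (t - min t (u i)) = n * t := by
      intro u
      rw [← Finset.sum_add_distrib,
        Finset.sum_congr rfl (fun i (_ : i ∈ Finset.univ) =>
          (by omega : min t (u i) + (t - min t (u i)) = t))]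
      simp [Finset.card_univ, mul_comm]
    have h6 := h5 v
    have h7 := h5 w
    omega
  have hsum' : ∀ t, ∑ i, min t (v i) = ∑ i, min t (w i) := by
    intro t
    rcases le_or_gt t m with h | h
    · exact hsum t h
    · have e1 : ∀ i : Fin n, min t (v i) = min m (v i) := fun i => by
        have := hvlt i; omega
      have e2 : ∀ i : Fin n, min t (w i) = min m (w i) := fun i => by
        have := hwlt i; omega
      rw [Finset.sum_congr rfl (fun i _ => e1 i), Finset.sum_congr rfl (fun i _ => e2 i)]
      exact hsum m le_rfl
  have hvw : v = w := eq_of_sum_min v w hvm hwm hsum'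
  intro i k
  have hvwi : padicValInt p (s i) = padicValInt p (sb i) := congrFun hvw i
  rw [padicValInt_dvd_iff, padicValInt_dvd_iff]
  simp only [hsne i, hsbne i, false_or]
  rw [hvwi]
end

section
/- Let p be a prime, A ∈ ℤ^{n×n} a non-singular p-characterized matrix, and m > v_p(det A) an integer. Then Ā = A rem p^m (entrywise remainder on division by p^m) is also p-characterized. -/
open Matrix Polynomial

/-
Reducing the entries modulo `p^m` changes every minor and every coefficient of the
characteristic polynomial by a multiple of `p^m`, and such a change preserves every
`p`-adic valuation below `m`. Here all relevant valuations are below `m`: `Δ_i ∣ det A`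
and `p^m ∤ det A` give `v_p(Δ_i) < m`, hence `v_p(f_i) < m` since `A` is
`p`-characterized. For `Δ_i`, the GCD of the minors, this is applied minor by minor.
-/

lemma Int.cast_zmod_natAbs_eq_iff_modEq {N a b : ℤ} :
    (a : ZMod N.natAbs) = b ↔ a ≡ b [ZMOD N] := by
  rw [ZMod.intCast_eq_intCast_iff_dvd_sub, Int.natAbs_dvd, Int.modEq_iff_dvd]

namespace Matrix

variable {ι : Type*} {N : ℤ} {A B : Matrix ι ι ℤ}

lemma map_intCast_zmod_eq_of_modEq (h : ∀ a b, A a b ≡ B a b [ZMOD N]) :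
    A.map (Int.castRingHom (ZMod N.natAbs)) = B.map (Int.castRingHom (ZMod N.natAbs)) := by
  ext a b
  exact Int.cast_zmod_natAbs_eq_iff_modEq.2 (h a b)

variable [Fintype ι] [DecidableEq ι]

lemma det_modEq_of_modEq (h : ∀ a b, A a b ≡ B a b [ZMOD N]) : A.det ≡ B.det [ZMOD N] := by
  have hdet := congrArg det (map_intCast_zmod_eq_of_modEq h)
  rw [← RingHom.mapMatrix_apply, ← RingHom.mapMatrix_apply, ← RingHom.map_det,
    ← RingHom.map_det] at hdet
  exact Int.cast_zmod_natAbs_eq_iff_modEq.1 hdet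

lemma charpoly_coeff_modEq_of_modEq (h : ∀ a b, A a b ≡ B a b [ZMOD N]) (j : ℕ) :
    A.charpoly.coeff j ≡ B.charpoly.coeff j [ZMOD N] := by
  have hcoeff := congrArg (fun P => P.coeff j)
    (congrArg charpoly (map_intCast_zmod_eq_of_modEq h))
  simp only [charpoly_map, coeff_map] at hcoeff
  exact Int.cast_zmod_natAbs_eq_iff_modEq.1 hcoeff

end Matrix

lemma pow_dvd_iff_of_forall_le {α : Type*} [Monoid α] {x a b : α} {m : ℕ}
    (h : ∀ k ≤ m, x ^ k ∣ a ↔ x ^ k ∣ b) (ha : ¬ x ^ m ∣ a) (k : ℕ) :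
    x ^ k ∣ a ↔ x ^ k ∣ b := by
  rcases le_or_gt k m with hk | hk
  · exact h k hk
  · exact iff_of_false (fun hka => ha ((pow_dvd_pow x hk.le).trans hka))
      (fun hkb => ha ((h m le_rfl).2 ((pow_dvd_pow x hk.le).trans hkb)))

section detDiv

variable {n : ℕ} (A : Matrix (Fin n) (Fin n) ℤ)

lemma detDiv_dvd_detDiv_succ (k : ℕ) : detDiv A k ∣ detDiv A (k + 1) := by
  refine Finset.dvd_gcd fun στ _ => ?_
  rw [det_succ_row_zero]
  refine Finset.dvd_sum fun j _ => Dvd.dvd.mul_left ?_ _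
  rw [submatrix_submatrix]
  exact Finset.gcd_dvd (Finset.mem_univ (στ.1 ∘ Fin.succ, στ.2 ∘ j.succAbove))

lemma detDiv_dvd_detDiv_of_le {i j : ℕ} (hij : i ≤ j) : detDiv A i ∣ detDiv A j := by
  induction j, hij using Nat.le_induction with
  | base => rfl
  | succ j _ ih => exact ih.trans (detDiv_dvd_detDiv_succ A j)

lemma detDiv_self_dvd_det : detDiv A n ∣ A.det :=
  Finset.gcd_dvd (f := fun στ : (Fin n → Fin n) × (Fin n → Fin n) => (A.submatrix στ.1 στ.2).det)
    (Finset.mem_univ (id, id))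

lemma detDiv_dvd_det {i : ℕ} (hi : i ≤ n) : detDiv A i ∣ A.det :=
  (detDiv_dvd_detDiv_of_le A hi).trans (detDiv_self_dvd_det A)

lemma dvd_detDiv_iff_of_modEq {B : Matrix (Fin n) (Fin n) ℤ} {d : ℤ}
    (h : ∀ a b, A a b ≡ B a b [ZMOD d]) (k : ℕ) : d ∣ detDiv A k ↔ d ∣ detDiv B k := by
  simp only [detDiv, Finset.dvd_gcd_iff, Finset.mem_univ, true_imp_iff]
  exact forall_congr' fun στ => (det_modEq_of_modEq fun a b => h _ _).dvd_iff

end detDiv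

/-- If `A ∈ ℤ^{n×n}` is non-singular and `p`-characterized,
and `m > v_p(det A)`, then `Ā = A rem p^m` (entrywise remainder on division by
`p^m`) is also `p`-characterized. -/
theorem rem_pCharacterized (n p : ℕ) (hp : p.Prime)
    (A : Matrix (Fin n) (Fin n) ℤ) (hA : A.det ≠ 0)
    (hchar : PCharacterized p A)
    (m : ℕ) (hm : padicValInt p A.det < m) :
    PCharacterized p (A.map (fun x => x % (p : ℤ) ^ m)) := by
  set Ā := A.map (fun x => x % (p : ℤ) ^ m)
  intro i hi₁ hiĀ k
  have hin : i ≤ n := hiĀ.trans (by simpa using rank_le_card_width Ā)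
  have hiA : i ≤ A.rank := by rwa [rank_of_det_ne_zero hA, Fintype.card_fin]
  have hmod : ∀ j ≤ m, ∀ a b, A a b ≡ Ā a b [ZMOD (p : ℤ) ^ j] := fun j hj a b =>
    ((Int.mod_modEq _ _).of_dvd (pow_dvd_pow _ hj)).symm
  have hdet : ¬ (p : ℤ) ^ m ∣ A.det := fun h => by
    rcases (padicValInt_dvd_iff_of_ne_one hp.ne_one m A.det).1 h with h | h <;> omega
  have hΔ : ¬ (p : ℤ) ^ m ∣ detDiv A i := fun h => hdet (h.trans (detDiv_dvd_det A hin))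
  have hf : ¬ (p : ℤ) ^ m ∣ A.charpoly.coeff (n - i) := mt (hchar i hi₁ hiA m).1 hΔ
  calc (p : ℤ) ^ k ∣ Ā.charpoly.coeff (n - i)
      ↔ (p : ℤ) ^ k ∣ A.charpoly.coeff (n - i) := (pow_dvd_iff_of_forall_le
        (fun j hj => (charpoly_coeff_modEq_of_modEq (hmod j hj) _).dvd_iff) hf k).symm
    _ ↔ (p : ℤ) ^ k ∣ detDiv A i := hchar i hi₁ hiA k
    _ ↔ (p : ℤ) ^ k ∣ detDiv Ā i := pow_dvd_iff_of_forall_le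
        (fun j hj => dvd_detDiv_iff_of_modEq A (hmod j hj) i) hΔ k
end
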